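/- arXiv:1303.2979 — 2 statements merged into one kernel-verified Lean document; each statement's English description precedes it below -/
import Mathlib

section
/- Let n ≥ 1 be an integer and a = 2/n. For every z > 0 and w ∈ [-1,1], with t = arccos w, one has K_{2/n}^2(z,w) = (1/n) ∑_{ℓ=0}^{n-1} e^{-i n z^{1/n} cos(t/n) cos(2πℓ/n)} · e^{i n z^{1/n} sin(t/n) sin(2πℓ/n)}. -/
/-!
Put `r = n z^{1/n}` and `φ = arccos w / n`. For `a = 2/n` the kernel is
`J₀(r) + 2 ∑ₖ (-i)^{kn} J_{kn}(r) cos(knφ)`, i.e. the part of the Jacobi–Anger expansion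
`e^{-i r cos θ} = ∑_{m ∈ ℤ} (-i)^{|m|} J_{|m|}(r) e^{imθ}` at `θ = φ` made of the modes `m ∈ nℤ`.
Averaging the expansion over the rotations `θ = φ + 2πl/n`, `l < n`, keeps exactly these modes,
since `∑_{l<n} ζ^{ml}` vanishes for a primitive `n`-th root of unity `ζ` unless `n ∣ m`; and by the
addition formula for `cos` the two exponentials on the right combine into `e^{-i r cos(φ + 2πl/n)}`.
The Jacobi–Anger expansion itself is the product of the exponential series of `-(ir/2) e^{iθ}` and
`-(ir/2) e^{-iθ}`, regrouped according to the difference `m` of the two summation indices.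
-/

open scoped Real

/-- Bessel function of the first kind `J_ν(z)`, defined by its series. -/
noncomputable def besselJ (ν z : ℝ) : ℝ :=
  ∑' j : ℕ, ((-1 : ℝ) ^ j / (j.factorial * Real.Gamma ((j : ℝ) + ν + 1))) *
    (z / 2) ^ (2 * (j : ℝ) + ν)


/-- The kernel `K_a^2(z,w)` of the radially deformed Fourier transform in dimension 2. -/
noncomputable def deformedKernel2 (a z w : ℝ) : ℂ :=
  ((besselJ 0 ((2 / a) * z ^ (a / 2)) : ℝ) : ℂ) +
    2 * ∑' k : ℕ, Complex.exp (-(Real.pi * ((k : ℝ) + 1) / a) * Complex.I) *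
      ((besselJ (2 * ((k : ℝ) + 1) / a) ((2 / a) * z ^ (a / 2)) : ℝ) : ℂ) *
      ((Real.cos (((k : ℝ) + 1) * Real.arccos w) : ℝ) : ℂ)

open scoped Nat
open Complex Finset

theorem hasSum_besselJ_natCast (m : ℕ) (r : ℝ) :
    HasSum (fun j : ℕ => (-1) ^ j / (j ! * (j + m)!) * (r / 2) ^ (2 * j + m))
      (besselJ m r) := by
  have hterm : ∀ j : ℕ,
      (-1 : ℝ) ^ j / (j ! * Real.Gamma (j + m + 1)) * (r / 2) ^ (2 * (j : ℝ) + m)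
        = (-1) ^ j / (j ! * (j + m)!) * (r / 2) ^ (2 * j + m) := fun j => by
    rw [show (j : ℝ) + m + 1 = (j + m : ℕ) + 1 by push_cast; ring, Real.Gamma_nat_eq_factorial,
      show 2 * (j : ℝ) + m = (2 * j + m : ℕ) by push_cast; ring, Real.rpow_natCast]
  have hbound : ∀ j : ℕ, ‖(-1 : ℝ) ^ j / (j ! * (j + m)!) * (r / 2) ^ (2 * j + m)‖
      ≤ |r / 2| ^ m * ((|r / 2| ^ 2) ^ j / j !) := fun j => by
    have hj : (0 : ℝ) < j ! := mod_cast j.factorial_pos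
    have hjm : (1 : ℝ) ≤ (j + m)! := mod_cast (j + m).factorial_pos
    simp only [norm_mul, norm_div, norm_pow, norm_neg, norm_one, one_pow, Real.norm_eq_abs,
      Nat.abs_cast]
    rw [show |r / 2| ^ m * ((|r / 2| ^ 2) ^ j / j !) = 1 / j ! * |r / 2| ^ (2 * j + m) by ring]
    gcongr
    · exact le_mul_of_one_le_right hj.le hjm
    · exact (abs_div r 2).ge
  unfold besselJ
  simp only [hterm]
  exact (((Real.summable_pow_div_factorial _).mul_left _).of_norm_bounded hbound).hasSum

theorem hasSum_neg_I_pow_mul_besselJ (m : ℕ) (r : ℝ) :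
    HasSum (fun j : ℕ => (-I * r / 2) ^ (2 * j + m) / (j ! * (j + m)!))
      ((-I) ^ m * besselJ m r) := by
  refine (((hasSum_besselJ_natCast m r).mapL ofRealCLM).mul_left ((-I) ^ m)).congr_fun
    fun j => ?_
  have hpow : (-I * r / 2) ^ (2 * j + m) = (-1) ^ j * (-I) ^ m * (r / 2) ^ (2 * j + m) := by
    rw [mul_div_assoc, mul_pow, pow_add (-I), pow_mul, neg_sq, I_sq]
  rw [ofRealCLM_apply, hpow]
  push_cast
  ring

theorem Complex.hasSum_exp (x : ℂ) : HasSum (fun n => x ^ n / (n ! : ℂ)) (exp x) := by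
  rw [exp_eq_exp_ℂ]
  exact NormedSpace.expSeries_div_hasSum_exp x

theorem Complex.hasSum_exp_mul_exp (x y : ℂ) :
    HasSum (fun p : ℕ × ℕ => x ^ p.1 / (p.1 ! : ℂ) * (y ^ p.2 / (p.2 ! : ℂ)))
      (exp x * exp y) := by
  have hxy : Summable fun p : ℕ × ℕ => x ^ p.1 / (p.1 ! : ℂ) * (y ^ p.2 / (p.2 ! : ℂ)) :=
    summable_mul_of_summable_norm (f := fun n => x ^ n / (n ! : ℂ))
      (g := fun n => y ^ n / (n ! : ℂ))
      (NormedSpace.norm_expSeries_div_summable x) (NormedSpace.norm_expSeries_div_summable y)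
  exact HasSum.mul (f := fun n => x ^ n / (n ! : ℂ)) (g := fun n => y ^ n / (n ! : ℂ))
    (hasSum_exp x) (hasSum_exp y) hxy

def intProdNatEquiv : ℤ × ℕ ≃ ℕ × ℕ where
  toFun x := (x.2 + x.1.toNat, x.2 + (-x.1).toNat)
  invFun p := ((p.1 : ℤ) - p.2, min p.1 p.2)
  left_inv x := by ext <;> dsimp <;> omega
  right_inv p := by ext <;> dsimp <;> omega

theorem hasSum_jacobiAnger (r θ : ℝ) :
    HasSum (fun m : ℤ => (-I) ^ m.natAbs * besselJ m.natAbs r * exp (m * θ * I))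
      (exp (-(r * Real.cos θ) * I)) := by
  have hsplit : exp (-(r * Real.cos θ) * I)
      = exp (-I * r / 2 * exp (θ * I)) * exp (-I * r / 2 * exp (-(θ * I))) := by
    rw [← exp_add, ofReal_cos, cos]
    ring_nf
  have hexp : ∀ a b : ℕ,
      exp (θ * I) ^ a * exp (-(θ * I)) ^ b = exp (((a : ℤ) - b : ℤ) * θ * I) := fun a b => by
    rw [← exp_nat_mul, ← exp_nat_mul, ← exp_add]
    push_cast
    ring_nf
  have hterm : ∀ x : ℤ × ℕ,
      (-I * r / 2 * exp (θ * I)) ^ (intProdNatEquiv x).1 / ((intProdNatEquiv x).1 ! : ℂ) *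
        ((-I * r / 2 * exp (-(θ * I))) ^ (intProdNatEquiv x).2 / ((intProdNatEquiv x).2 ! : ℂ))
      = (-I * r / 2) ^ (2 * x.2 + x.1.natAbs) / (x.2 ! * (x.2 + x.1.natAbs)!) *
          exp (x.1 * θ * I) := by
    rintro ⟨m, j⟩
    rcases Int.eq_nat_or_neg m with ⟨k, rfl | rfl⟩
    · simp only [intProdNatEquiv, Equiv.coe_fn_mk, Int.toNat_natCast, Int.toNat_neg_natCast,
        Int.natAbs_natCast, add_zero]
      rw [show ((k : ℤ) : ℂ) = (((j + k : ℕ) : ℤ) - (j : ℕ) : ℤ) by push_cast; ring, ← hexp]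
      ring
    · simp only [intProdNatEquiv, Equiv.coe_fn_mk, Int.toNat_natCast, Int.toNat_neg_natCast,
        Int.natAbs_neg, Int.natAbs_natCast, neg_neg, add_zero]
      rw [show ((-(k : ℤ) : ℤ) : ℂ) = (((j : ℕ) : ℤ) - (j + k : ℕ) : ℤ) by push_cast; ring,
        ← hexp]
      ring
  have hprod := (intProdNatEquiv.hasSum_iff.mpr (hasSum_exp_mul_exp _ _)).congr_fun
    fun x => (hterm x).symm
  rw [hsplit]
  exact hprod.prod_fiberwise fun m => (hasSum_neg_I_pow_mul_besselJ m.natAbs r).mul_right _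

theorem IsPrimitiveRoot.sum_range_zpow_pow {K : Type*} [Field K] {ζ : K} {n : ℕ}
    (hζ : IsPrimitiveRoot ζ n) (m : ℤ) :
    ∑ l ∈ range n, (ζ ^ m) ^ l = if (n : ℤ) ∣ m then (n : K) else 0 := by
  split_ifs with hdvd
  · simp [(hζ.zpow_eq_one_iff_dvd m).mpr hdvd]
  · have hne : ζ ^ m ≠ 1 := mt (hζ.zpow_eq_one_iff_dvd m).mp hdvd
    rw [geom_sum_eq hne, ← zpow_natCast, ← zpow_mul, mul_comm, zpow_mul, zpow_natCast,
      hζ.pow_eq_one, one_zpow, sub_self, zero_div]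

theorem hasSum_average_exp_neg_mul_cos {n : ℕ} (hn : n ≠ 0) (r θ : ℝ) :
    HasSum (fun m : ℤ => if (n : ℤ) ∣ m then
        (-I) ^ m.natAbs * besselJ m.natAbs r * exp (m * θ * I) else 0)
      (1 / n * ∑ l ∈ range n, exp (-(r * Real.cos (θ + 2 * π * l / n)) * I)) := by
  have hζ := isPrimitiveRoot_exp n hn
  have hrotate : ∀ (m : ℤ) (l : ℕ), exp (m * (θ + 2 * π * l / n : ℝ) * I)
      = exp (m * θ * I) * (exp (2 * π * I / n) ^ m) ^ l := fun m l => by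
    rw [← exp_int_mul, ← exp_nat_mul, ← exp_add]
    push_cast
    ring_nf
  refine ((hasSum_sum (s := range n) fun (l : ℕ) _ =>
    hasSum_jacobiAnger r (θ + 2 * π * l / n)).mul_left (1 / n : ℂ)).congr_fun fun m => ?_
  simp only [hrotate, ← mul_sum, hζ.sum_range_zpow_pow]
  have : (n : ℂ) ≠ 0 := by exact_mod_cast hn
  split_ifs
  · field_simp
  · simp

theorem HasSum.nat_add_one_add_neg_add_one {G : Type*} [AddCommGroup G] [TopologicalSpace G]
    [IsTopologicalAddGroup G] {f : ℤ → G} {a : G} (hf : HasSum f a) :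
    HasSum (fun k : ℕ => f (k + 1) + f (-(k + 1))) (a - f 0) := by
  have h := (hasSum_nat_add_iff' 1).mpr hf.nat_add_neg
  simp only [range_one, sum_singleton, Nat.cast_zero, neg_zero, Nat.cast_add, Nat.cast_one] at h
  convert h using 1
  abel

theorem besselJ_zero_add_two_mul_tsum_eq_average {n : ℕ} (hn : n ≠ 0) (r θ : ℝ) :
    (besselJ 0 r : ℂ) + 2 * ∑' k : ℕ,
        (-I) ^ ((k + 1) * n) * besselJ ((k + 1) * n : ℕ) r * Real.cos ((k + 1) * n * θ)
      = 1 / n * ∑ l ∈ range n, exp (-(r * Real.cos (θ + 2 * π * l / n)) * I) := by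
  set f : ℤ → ℂ := fun m => (-I) ^ m.natAbs * besselJ m.natAbs r * exp (m * θ * I)
  have hmultiples : HasSum (fun k : ℤ => f (k * n))
      (1 / n * ∑ l ∈ range n, exp (-(r * Real.cos (θ + 2 * π * l / n)) * I)) := by
    refine ((mul_left_injective₀ (Int.natCast_ne_zero.mpr hn)).hasSum_iff ?_).mpr
      (hasSum_average_exp_neg_mul_cos hn r θ) |>.congr_fun fun k => ?_
    · rintro m hm
      rw [if_neg]
      rintro ⟨k, rfl⟩
      exact hm ⟨k, mul_comm _ _⟩
    · exact (if_pos (dvd_mul_left _ _)).symm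
  have hpair : ∀ k : ℕ, f ((k + 1 : ℕ) * n) + f (-(k + 1 : ℕ) * n) =
      2 * ((-I) ^ ((k + 1) * n) * besselJ ((k + 1) * n : ℕ) r * Real.cos ((k + 1) * n * θ)) := by
    intro k
    simp only [f, Int.natAbs_neg, Int.natAbs_mul, Int.natAbs_natCast, ofReal_cos, cos]
    push_cast
    ring_nf
  have hfold := hmultiples.nat_add_one_add_neg_add_one.congr_fun fun k => (hpair k).symm
  rw [← tsum_mul_left, hfold.tsum_eq]
  simp [f]

theorem Complex.neg_I_pow_eq_exp (N : ℕ) : (-I) ^ N = exp (-(π * N / 2) * I) := by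
  rw [← exp_neg_pi_div_two_mul_I, ← exp_nat_mul]
  ring_nf

theorem kernel_dim_two_closed_formula_general (n : ℕ) (hn : 1 ≤ n) (z : ℝ)
    (w : ℝ) :
    deformedKernel2 (2 / (n : ℝ)) z w =
      (1 / (n : ℂ)) * ∑ l ∈ Finset.range n,
        Complex.exp (-(((n : ℝ) * z ^ ((1 : ℝ) / (n : ℝ)) * Real.cos (Real.arccos w / (n : ℝ)) *
            Real.cos (2 * Real.pi * (l : ℝ) / (n : ℝ)) : ℝ) : ℂ) * Complex.I) *
        Complex.exp ((((n : ℝ) * z ^ ((1 : ℝ) / (n : ℝ)) * Real.sin (Real.arccos w / (n : ℝ)) *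
            Real.sin (2 * Real.pi * (l : ℝ) / (n : ℝ)) : ℝ) : ℂ) * Complex.I) := by
  have hn0 : (n : ℝ) ≠ 0 := by positivity
  have harg : 2 / (2 / (n : ℝ)) * z ^ (2 / (n : ℝ) / 2) = n * z ^ (1 / (n : ℝ)) := by
    congr 2 <;> field_simp
  have hterm : ∀ k : ℕ, exp (-(π * ((k : ℝ) + 1) / ((2 / n : ℝ) : ℂ)) * I) *
        besselJ (2 * ((k : ℝ) + 1) / (2 / n)) (n * z ^ (1 / (n : ℝ))) *
        Real.cos (((k : ℝ) + 1) * Real.arccos w)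
      = (-I) ^ ((k + 1) * n) * besselJ ((k + 1) * n : ℕ) (n * z ^ (1 / (n : ℝ))) *
        Real.cos ((k + 1) * n * (Real.arccos w / n)) := fun k => by
    rw [neg_I_pow_eq_exp, show 2 * ((k : ℝ) + 1) / (2 / n) = ((k + 1) * n : ℕ) by
        push_cast; field_simp,
      show ((k : ℝ) + 1) * Real.arccos w = (k + 1) * n * (Real.arccos w / n) by field_simp]
    congr 3
    push_cast
    field_simp
  rw [deformedKernel2, harg, tsum_congr hterm,
    besselJ_zero_add_two_mul_tsum_eq_average (Nat.one_le_iff_ne_zero.mp hn)]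
  congr 1
  refine sum_congr rfl fun l _ => ?_
  rw [← exp_add, Real.cos_add]
  push_cast
  ring_nf

/-- Closed formula for the two-dimensional kernel when `a = 2/n`. -/
theorem kernel_dim_two_closed_formula (n : ℕ) (hn : 1 ≤ n) (z : ℝ) (hz : 0 < z)
    (w : ℝ) (hw : w ∈ Set.Icc (-1 : ℝ) 1) :
    deformedKernel2 (2 / (n : ℝ)) z w =
      (1 / (n : ℂ)) * ∑ l ∈ Finset.range n,
        Complex.exp (-(((n : ℝ) * z ^ ((1 : ℝ) / (n : ℝ)) * Real.cos (Real.arccos w / (n : ℝ)) *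
            Real.cos (2 * Real.pi * (l : ℝ) / (n : ℝ)) : ℝ) : ℂ) * Complex.I) *
        Complex.exp ((((n : ℝ) * z ^ ((1 : ℝ) / (n : ℝ)) * Real.sin (Real.arccos w / (n : ℝ)) *
            Real.sin (2 * Real.pi * (l : ℝ) / (n : ℝ)) : ℝ) : ℂ) * Complex.I) :=
  kernel_dim_two_closed_formula_general n hn z w
end

section
/- Let k ≥ 1 be an integer, n = 2k+1 and a = 2/n. For every z > 0 and w ∈ [-1,1], with t = arccos w, one has K_{2/(2k+1)}^2(z,w) = (1/(2k+1)) cos(n z^{1/n} cos(t/n)) + (2/(2k+1)) ∑_{ℓ=1}^{k} cos(n z^{1/n} cos(t/n) cos(2πℓ/(2k+1))) cos(n z^{1/n} sin(t/n) sin(2πℓ/(2k+1))) − (i/(2k+1)) sin(n z^{1/n} cos(t/n)) − (2i/(2k+1)) ∑_{ℓ=1}^{k} sin(n z^{1/n} cos(t/n) cos(2πℓ/(2k+1))) cos(n z^{1/n} sin(t/n) sin(2πℓ/(2k+1))). -/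
/-!
Write `x = n z^{1/n}`, `τ = t/n` and `θ_j = 2πj/n`. The Laurent expansion
`exp (x/2 (u - u⁻¹)) = ∑_{m ∈ ℤ} J_m(x) u^m` at `u = -i e^{iψ}` is the Jacobi–Anger identity
`e^{-ix cos ψ} = ∑_m J_m(x) (-i e^{iψ})^m`. Averaging it over the `n` rotations `ψ = τ + θ_j`
keeps exactly the orders `m ∈ nℤ`, and folding `±m` together with `J_{-m} = (-1)^m J_m` turns
that series into the kernel for `a = 2/n`: `K = (1/n) ∑_{j<n} e^{-ix cos(τ + θ_j)}`. For odd
`n = 2k+1` the terms `j` and `n - j` are `e^{-ix cos(τ ± θ_j)}`, which combine into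
`2 e^{-ix cos τ cos θ_j} cos (x sin τ sin θ_j)`.
-/

open scoped Real

open Complex Finset
open scoped Nat

/-- The Laurent coefficients of `exp (x/2 (u - u⁻¹))`: `J_m(x)` for `m ≥ 0` and `(-1)^m J_{-m}(x)`
for `m < 0`. -/
noncomputable def besselJInt (m : ℤ) (x : ℂ) : ℂ :=
  ∑' j : ℕ,
    (-1) ^ (j + (-m).toNat) * (x / 2) ^ (2 * j + m.natAbs) / (j ! * (j + m.natAbs)! : ℂ)

def intNatEquivNatNat : ℤ × ℕ ≃ ℕ × ℕ where
  toFun p := (p.2 + p.1.toNat, p.2 + (-p.1).toNat)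
  invFun q := ((q.1 : ℤ) - q.2, min q.1 q.2)
  left_inv := by rintro ⟨m, j⟩; simp only [Prod.mk.injEq]; constructor <;> omega
  right_inv := by rintro ⟨p, q⟩; simp only [Prod.mk.injEq]; constructor <;> omega

theorem hasSum_pow_div_factorial_mul_pow_div_factorial (A B : ℂ) :
    HasSum (fun q : ℕ × ℕ => A ^ q.1 / (q.1 ! : ℂ) * (B ^ q.2 / (q.2 ! : ℂ)))
      (exp A * exp B) := by
  have hA := NormedSpace.expSeries_div_hasSum_exp A
  have hB := NormedSpace.expSeries_div_hasSum_exp B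
  rw [← exp_eq_exp_ℂ] at hA hB
  have hAB := summable_mul_of_summable_norm (NormedSpace.norm_expSeries_div_summable A)
    (NormedSpace.norm_expSeries_div_summable B)
  exact (HasSum.mul hA hB hAB :)

theorem pow_div_factorial_mul_pow_div_factorial_eq (x : ℂ) {u : ℂ} (hu : u ≠ 0) (m : ℤ)
    (j : ℕ) :
    (x / 2 * u) ^ (j + m.toNat) / (j + m.toNat)! *
        ((-(x / 2) * u⁻¹) ^ (j + (-m).toNat) / (j + (-m).toNat)!) =
      (-1) ^ (j + (-m).toNat) * (x / 2) ^ (2 * j + m.natAbs) / (j ! * (j + m.natAbs)! : ℂ) *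
        u ^ m := by
  rw [neg_mul, neg_pow, mul_pow, mul_pow]
  obtain ⟨M, rfl | rfl⟩ := Int.eq_nat_or_neg m
  · simp only [Int.toNat_natCast, Int.toNat_neg_natCast, Int.natAbs_natCast, add_zero,
      zpow_natCast, pow_add u, inv_pow]
    field_simp
    ring
  · simp only [Int.toNat_neg_natCast, neg_neg, Int.toNat_natCast, Int.natAbs_neg,
      Int.natAbs_natCast, add_zero, zpow_neg, zpow_natCast, pow_add u⁻¹, inv_pow]
    field_simp
    ring

theorem hasSum_besselJInt_mul_zpow (x : ℂ) {u : ℂ} (hu : u ≠ 0) :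
    HasSum (fun m : ℤ => besselJInt m x * u ^ m) (exp (x / 2 * (u - u⁻¹))) := by
  -- the Cauchy product of the series of `exp (x u / 2)` and `exp (-x / (2 u))`, regrouped by the
  -- power `p - q` of `u`
  have hprod := (intNatEquivNatNat.hasSum_iff).2
    (hasSum_pow_div_factorial_mul_pow_div_factorial (x / 2 * u) (-(x / 2) * u⁻¹))
  rw [← exp_add, show x / 2 * u + -(x / 2) * u⁻¹ = x / 2 * (u - u⁻¹) by ring] at hprod
  replace hprod := hprod.congr_fun fun p =>
    (pow_div_factorial_mul_pow_div_factorial_eq x hu p.1 p.2).symm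
  refine hprod.prod_fiberwise fun m => ?_
  simpa only [besselJInt, tsum_mul_right] using (hprod.summable.prod_factor m).hasSum

theorem besselJInt_neg_natCast (M : ℕ) (x : ℂ) :
    besselJInt (-M) x = (-1) ^ M * besselJInt M x := by
  simp only [besselJInt, ← tsum_mul_left, neg_neg, Int.toNat_natCast, Int.toNat_neg_natCast,
    Int.natAbs_neg, Int.natAbs_natCast, add_zero, pow_add]
  exact tsum_congr fun j => by ring

theorem ofReal_besselJ_natCast (M : ℕ) (x : ℝ) : (besselJ M x : ℂ) = besselJInt M x := by
  rw [besselJ, ofReal_tsum]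
  refine tsum_congr fun j => ?_
  have hΓ : Real.Gamma (j + M + 1) = (j + M)! := by
    exact_mod_cast Real.Gamma_nat_eq_factorial (j + M)
  have hpow : (x / 2) ^ (2 * (j : ℝ) + M) = (x / 2) ^ (2 * j + M) := by
    exact_mod_cast Real.rpow_natCast (x / 2) (2 * j + M)
  simp only [hΓ, hpow, Int.toNat_neg_natCast, Int.natAbs_natCast, add_zero]
  push_cast
  ring

theorem hasSum_besselJInt_jacobiAnger (x ψ : ℂ) :
    HasSum (fun m : ℤ => besselJInt m x * (-I * exp (ψ * I)) ^ m) (exp (-(x * cos ψ) * I)) := by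
  convert hasSum_besselJInt_mul_zpow x (mul_ne_zero (neg_ne_zero.2 I_ne_zero) (exp_ne_zero _))
    using 2
  rw [mul_inv, inv_neg, inv_I, neg_neg, ← exp_neg, cos]
  ring_nf

theorem besselJInt_mul_zpow_add_neg (M : ℕ) (x ψ : ℂ) :
    besselJInt M x * (-I * exp (ψ * I)) ^ (M : ℤ) +
        besselJInt (-M) x * (-I * exp (ψ * I)) ^ (-(M : ℤ)) =
      2 * (-I) ^ M * besselJInt M x * cos (M * ψ) := by
  have hsign : (-1) ^ M * ((-I) ^ M)⁻¹ = (-I) ^ M := by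
    rw [← inv_pow, inv_neg, inv_I, ← mul_pow]; ring_nf
  have hcos : cos (M * ψ) = (exp (ψ * I) ^ M + (exp (ψ * I) ^ M)⁻¹) / 2 := by
    rw [cos, ← exp_nat_mul, ← exp_neg]; ring_nf
  rw [besselJInt_neg_natCast, zpow_neg, zpow_natCast, mul_pow, mul_inv, hcos]
  linear_combination (besselJInt M x * (exp (ψ * I) ^ M)⁻¹) * hsign

theorem IsPrimitiveRoot.geom_sum_zpow_eq_ite {K : Type*} [Field K] {ζ : K} {n : ℕ}
    (hζ : IsPrimitiveRoot ζ n) (m : ℤ) :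
    ∑ j ∈ range n, (ζ ^ m) ^ j = if (n : ℤ) ∣ m then (n : K) else 0 := by
  split_ifs with hm
  · simp [(hζ.zpow_eq_one_iff_dvd m).2 hm]
  · have hζm : (ζ ^ m) ^ n = 1 := by
      rw [← zpow_natCast, ← zpow_mul, mul_comm, zpow_mul, hζ.zpow_eq_one, one_zpow]
    rw [geom_sum_eq (mt (hζ.zpow_eq_one_iff_dvd m).1 hm), hζm, sub_self, zero_div]

theorem IsPrimitiveRoot.hasSum_multisection {K : Type*} [Field K] [CharZero K]
    [TopologicalSpace K] [IsTopologicalRing K] {ζ : K} {n : ℕ} (hζ : IsPrimitiveRoot ζ n)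
    (hn : n ≠ 0)
    {c : ℤ → K} {u : K} {F : ℕ → K} (hF : ∀ j, HasSum (fun m => c m * (u * ζ ^ j) ^ m) (F j)) :
    HasSum (fun m : ℤ => c (n * m) * u ^ (n * m)) ((n : K)⁻¹ * ∑ j ∈ range n, F j) := by
  have hsum := hasSum_sum fun j (_ : j ∈ range n) => hF j
  have hfilter : ∀ m : ℤ, ∑ j ∈ range n, c m * (u * ζ ^ j) ^ m =
      if (n : ℤ) ∣ m then n * (c m * u ^ m) else 0 := by
    intro m
    simp_rw [mul_zpow, ← zpow_natCast ζ, ← zpow_mul, mul_comm _ m, zpow_mul, zpow_natCast,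
      ← mul_assoc, ← mul_sum, hζ.geom_sum_zpow_eq_ite m]
    split_ifs <;> ring
  simp_rw [hfilter] at hsum
  have hmul_inj : Function.Injective (fun m : ℤ => (n : ℤ) * m) :=
    mul_right_injective₀ (Int.natCast_ne_zero.2 hn)
  rw [← hmul_inj.hasSum_iff] at hsum
  · simpa [Function.comp_def, ← mul_assoc, inv_mul_cancel₀ (Nat.cast_ne_zero.2 hn : (n : K) ≠ 0)]
      using hsum.mul_left (n : K)⁻¹
  · rintro m hm
    rw [if_neg fun ⟨l, hl⟩ => hm ⟨l, hl.symm⟩]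

theorem exp_neg_pi_mul_div_two_mul_I (M : ℕ) : exp (-(π * M / 2) * I) = (-I) ^ M := by
  rw [show -(π * M / 2) * I = M * -(π / 2 * I) by ring, exp_nat_mul, exp_neg,
    exp_pi_div_two_mul_I, inv_I]

theorem deformedKernel2_two_div_natCast_eq_tsum {n : ℕ} (hn : n ≠ 0) (z w : ℝ) :
    deformedKernel2 (2 / n) z w =
      besselJInt 0 (n * ↑(z ^ (1 / (n : ℝ)))) + 2 * ∑' p : ℕ, (-I) ^ (n * (p + 1)) *
        besselJInt ↑(n * (p + 1)) (n * ↑(z ^ (1 / (n : ℝ)))) *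
          cos (↑(n * (p + 1)) * (↑(Real.arccos w) / n)) := by
  have harg : 2 / (2 / (n : ℝ)) * z ^ (2 / (n : ℝ) / 2) = n * z ^ (1 / (n : ℝ)) := by
    field_simp
  have horder (p : ℕ) : 2 * ((p : ℝ) + 1) / (2 / n) = ↑(n * (p + 1)) := by
    push_cast; field_simp
  have hphase (p : ℕ) :
      exp (-(π * (((p : ℝ) : ℂ) + 1) / ((2 / n : ℝ) : ℂ)) * I) = (-I) ^ (n * (p + 1)) := by
    rw [← exp_neg_pi_mul_div_two_mul_I]
    push_cast
    field_simp
  have hangle (p : ℕ) :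
      (↑(n * (p + 1)) * (↑(Real.arccos w) / n) : ℂ) = ↑(((p : ℝ) + 1) * Real.arccos w) := by
    push_cast; field_simp
  rw [deformedKernel2, harg]
  congr 1
  · exact_mod_cast ofReal_besselJ_natCast 0 _
  refine congrArg (2 * ·) (tsum_congr fun p => ?_)
  rw [horder, hphase, hangle, ofReal_besselJ_natCast, ofReal_cos]
  norm_cast

theorem deformedKernel2_two_div_natCast_eq_sum {n : ℕ} (hn : n ≠ 0) (z w : ℝ) :
    deformedKernel2 (2 / n) z w = (n : ℂ)⁻¹ * ∑ j ∈ range n,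
      exp (-(n * ↑(z ^ (1 / (n : ℝ))) * cos (↑(Real.arccos w) / n + 2 * π * j / n)) * I) := by
  set x : ℂ := n * ↑(z ^ (1 / (n : ℝ)))
  set τ : ℂ := ↑(Real.arccos w) / n
  set u : ℂ := -I * exp (τ * I)
  have hroots : ∀ j : ℕ, HasSum (fun m => besselJInt m x * (u * exp (2 * π * I / n) ^ j) ^ m)
      (exp (-(x * cos (τ + 2 * π * j / n)) * I)) := by
    intro j
    convert hasSum_besselJInt_jacobiAnger x (τ + 2 * π * j / n) using 4 with m
    rw [mul_assoc, ← exp_nat_mul, ← exp_add]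
    ring_nf
  have hmultiples := (isPrimitiveRoot_exp n hn).hasSum_multisection hn hroots
  have hpairs : HasSum (fun p : ℕ => 2 * ((-I) ^ (n * (p + 1)) * besselJInt ↑(n * (p + 1)) x *
      cos (↑(n * (p + 1)) * τ)))
      ((n : ℂ)⁻¹ * ∑ j ∈ range n, exp (-(x * cos (τ + 2 * π * j / n)) * I) - besselJInt 0 x) := by
    have h := (hasSum_nat_add_iff' 1).2 hmultiples.nat_add_neg
    simp only [sum_range_one, Nat.cast_zero, mul_zero, neg_zero, zpow_zero, mul_one,
      add_sub_add_right_eq_sub] at h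
    refine h.congr_fun fun p => ?_
    rw [mul_neg, ← Nat.cast_mul, besselJInt_mul_zpow_add_neg]
    ring
  rw [deformedKernel2_two_div_natCast_eq_tsum hn, ← tsum_mul_left, hpairs.tsum_eq]
  ring

theorem Finset.sum_range_two_mul_add_one {M : Type*} [AddCommMonoid M] (F : ℕ → M) (k : ℕ) :
    ∑ j ∈ range (2 * k + 1), F j = F 0 + ∑ l ∈ Icc 1 k, (F l + F (2 * k + 1 - l)) := by
  rw [range_eq_Ico, ← sum_Ico_consecutive _ (Nat.zero_le (k + 1)) (by omega : k + 1 ≤ 2 * k + 1),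
    sum_eq_sum_Ico_succ_bot (Nat.succ_pos k), sum_add_distrib, add_assoc,
    ← Ico_add_one_right_eq_Icc, sum_Ico_reflect _ _ (by omega : k + 1 ≤ 2 * k + 1 + 1)]
  rw [show 2 * k + 1 + 1 - (k + 1) = k + 1 by omega, Nat.add_sub_cancel]
  rfl

theorem exp_neg_mul_cos_add_add_exp_neg_mul_cos_sub (x a b : ℂ) :
    exp (-(x * cos (a + b)) * I) + exp (-(x * cos (a - b)) * I) =
      2 * (cos (x * cos a * cos b) - I * sin (x * cos a * cos b)) * cos (x * sin a * sin b) := by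
  set P := x * cos a * cos b
  set Q := x * sin a * sin b
  have hexp : exp (-P * I) = cos P - I * sin P := by
    rw [exp_mul_I, cos_neg, sin_neg]; ring
  have hcos : 2 * cos Q = exp (Q * I) + exp (-Q * I) := by
    rw [cos]; ring
  calc exp (-(x * cos (a + b)) * I) + exp (-(x * cos (a - b)) * I)
      = exp (-P * I) * (exp (Q * I) + exp (-Q * I)) := by
        rw [mul_add, ← exp_add, ← exp_add, cos_add, cos_sub]
        congr 2 <;> simp only [P, Q] <;> ring
    _ = _ := by rw [hexp, ← hcos]; ring

theorem inv_mul_sum_range_exp_neg_mul_cos_odd (k : ℕ) (x τ : ℂ) :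
    (2 * (k : ℂ) + 1)⁻¹ * ∑ j ∈ range (2 * k + 1),
        exp (-(x * cos (τ + 2 * π * j / (2 * k + 1))) * I) =
      1 / (2 * (k : ℂ) + 1) * cos (x * cos τ) +
        2 / (2 * (k : ℂ) + 1) * ∑ l ∈ Icc 1 k,
          cos (x * cos τ * cos (2 * π * l / (2 * k + 1))) *
            cos (x * sin τ * sin (2 * π * l / (2 * k + 1))) -
        I / (2 * (k : ℂ) + 1) * sin (x * cos τ) -
        2 * I / (2 * (k : ℂ) + 1) * ∑ l ∈ Icc 1 k,
          sin (x * cos τ * cos (2 * π * l / (2 * k + 1))) *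
            cos (x * sin τ * sin (2 * π * l / (2 * k + 1))) := by
  have hn : (2 * (k : ℂ) + 1) ≠ 0 := by exact_mod_cast Nat.succ_ne_zero (2 * k)
  have hreflect : ∀ l ∈ Icc 1 k, exp (-(x * cos (τ + 2 * π * l / (2 * k + 1))) * I) +
      exp (-(x * cos (τ + 2 * π * ↑(2 * k + 1 - l) / (2 * k + 1))) * I) =
        2 * (cos (x * cos τ * cos (2 * π * l / (2 * k + 1))) -
          I * sin (x * cos τ * cos (2 * π * l / (2 * k + 1)))) *
            cos (x * sin τ * sin (2 * π * l / (2 * k + 1))) := by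
    intro l hl
    have hl' : l ≤ 2 * k + 1 := by grind
    have hangle : τ + 2 * π * ↑(2 * k + 1 - l) / (2 * k + 1) =
        τ - 2 * π * l / (2 * k + 1) + 2 * π := by
      rw [Nat.cast_sub hl']
      push_cast
      field_simp
      ring
    rw [hangle, cos_add_two_pi, exp_neg_mul_cos_add_add_exp_neg_mul_cos_sub]
  have hzero : exp (-(x * cos (τ + 2 * π * ((0 : ℕ) : ℂ) / (2 * k + 1))) * I) =
      cos (x * cos τ) - I * sin (x * cos τ) := by
    rw [Nat.cast_zero, mul_zero, zero_div, add_zero, exp_mul_I, cos_neg, sin_neg]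
    ring
  rw [sum_range_two_mul_add_one, sum_congr rfl hreflect, hzero, mul_sum, mul_sum,
    add_sub_right_comm, add_sub_assoc, ← sum_sub_distrib, mul_add, mul_sum]
  congr 1
  · ring
  · exact sum_congr rfl fun l _ => by ring

theorem kernel_dim_two_odd_case_general (k : ℕ) (z : ℝ) (w : ℝ) :
    deformedKernel2 (2 / (2 * (k : ℝ) + 1)) z w =
      (1 / (2 * (k : ℂ) + 1)) *
        ((Real.cos ((2 * (k : ℝ) + 1) * z ^ ((1 : ℝ) / (2 * (k : ℝ) + 1)) *
            Real.cos (Real.arccos w / (2 * (k : ℝ) + 1))) : ℝ) : ℂ) +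
      (2 / (2 * (k : ℂ) + 1)) * ∑ l ∈ Finset.Icc 1 k,
        ((Real.cos ((2 * (k : ℝ) + 1) * z ^ ((1 : ℝ) / (2 * (k : ℝ) + 1)) *
            Real.cos (Real.arccos w / (2 * (k : ℝ) + 1)) *
            Real.cos (2 * Real.pi * (l : ℝ) / (2 * (k : ℝ) + 1))) : ℝ) : ℂ) *
        ((Real.cos ((2 * (k : ℝ) + 1) * z ^ ((1 : ℝ) / (2 * (k : ℝ) + 1)) *
            Real.sin (Real.arccos w / (2 * (k : ℝ) + 1)) *
            Real.sin (2 * Real.pi * (l : ℝ) / (2 * (k : ℝ) + 1))) : ℝ) : ℂ) -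
      (Complex.I / (2 * (k : ℂ) + 1)) *
        ((Real.sin ((2 * (k : ℝ) + 1) * z ^ ((1 : ℝ) / (2 * (k : ℝ) + 1)) *
            Real.cos (Real.arccos w / (2 * (k : ℝ) + 1))) : ℝ) : ℂ) -
      (2 * Complex.I / (2 * (k : ℂ) + 1)) * ∑ l ∈ Finset.Icc 1 k,
        ((Real.sin ((2 * (k : ℝ) + 1) * z ^ ((1 : ℝ) / (2 * (k : ℝ) + 1)) *
            Real.cos (Real.arccos w / (2 * (k : ℝ) + 1)) *
            Real.cos (2 * Real.pi * (l : ℝ) / (2 * (k : ℝ) + 1))) : ℝ) : ℂ) *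
        ((Real.cos ((2 * (k : ℝ) + 1) * z ^ ((1 : ℝ) / (2 * (k : ℝ) + 1)) *
            Real.sin (Real.arccos w / (2 * (k : ℝ) + 1)) *
            Real.sin (2 * Real.pi * (l : ℝ) / (2 * (k : ℝ) + 1))) : ℝ) : ℂ) := by
  have hsum := deformedKernel2_two_div_natCast_eq_sum (by omega : 2 * k + 1 ≠ 0) z w
  push_cast at hsum ⊢
  rw [hsum]
  exact inv_mul_sum_range_exp_neg_mul_cos_odd k _ _

/-- Closed formula for the two-dimensional kernel when `a = 2/(2k+1)` (i.e. `n = 2k+1` odd). -/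
theorem kernel_dim_two_odd_case (k : ℕ) (hk : 1 ≤ k) (z : ℝ) (hz : 0 < z)
    (w : ℝ) (hw : w ∈ Set.Icc (-1 : ℝ) 1) :
    deformedKernel2 (2 / (2 * (k : ℝ) + 1)) z w =
      (1 / (2 * (k : ℂ) + 1)) *
        ((Real.cos ((2 * (k : ℝ) + 1) * z ^ ((1 : ℝ) / (2 * (k : ℝ) + 1)) *
            Real.cos (Real.arccos w / (2 * (k : ℝ) + 1))) : ℝ) : ℂ) +
      (2 / (2 * (k : ℂ) + 1)) * ∑ l ∈ Finset.Icc 1 k,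
        ((Real.cos ((2 * (k : ℝ) + 1) * z ^ ((1 : ℝ) / (2 * (k : ℝ) + 1)) *
            Real.cos (Real.arccos w / (2 * (k : ℝ) + 1)) *
            Real.cos (2 * Real.pi * (l : ℝ) / (2 * (k : ℝ) + 1))) : ℝ) : ℂ) *
        ((Real.cos ((2 * (k : ℝ) + 1) * z ^ ((1 : ℝ) / (2 * (k : ℝ) + 1)) *
            Real.sin (Real.arccos w / (2 * (k : ℝ) + 1)) *
            Real.sin (2 * Real.pi * (l : ℝ) / (2 * (k : ℝ) + 1))) : ℝ) : ℂ) -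
      (Complex.I / (2 * (k : ℂ) + 1)) *
        ((Real.sin ((2 * (k : ℝ) + 1) * z ^ ((1 : ℝ) / (2 * (k : ℝ) + 1)) *
            Real.cos (Real.arccos w / (2 * (k : ℝ) + 1))) : ℝ) : ℂ) -
      (2 * Complex.I / (2 * (k : ℂ) + 1)) * ∑ l ∈ Finset.Icc 1 k,
        ((Real.sin ((2 * (k : ℝ) + 1) * z ^ ((1 : ℝ) / (2 * (k : ℝ) + 1)) *
            Real.cos (Real.arccos w / (2 * (k : ℝ) + 1)) *
            Real.cos (2 * Real.pi * (l : ℝ) / (2 * (k : ℝ) + 1))) : ℝ) : ℂ) *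
        ((Real.cos ((2 * (k : ℝ) + 1) * z ^ ((1 : ℝ) / (2 * (k : ℝ) + 1)) *
            Real.sin (Real.arccos w / (2 * (k : ℝ) + 1)) *
            Real.sin (2 * Real.pi * (l : ℝ) / (2 * (k : ℝ) + 1))) : ℝ) : ℂ) :=
  kernel_dim_two_odd_case_general k z w
end
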